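/- For every integer n ≥ 1, in ℤ[x_1,…,x_n] one has pol_{2^{n−1}}(p_n) ≡ Σ_{i=0}^{n−1} Φ_i(x_{i+1}; x_1,…,x_i)^{2^{(n−1)−i}} (mod 2), where the i = 0 summand is x_1^{2^{n−1}} (since Φ_0(x_1) = x_1). -/
import Mathlib


open MvPolynomial

/-- `Φ n x₀ x = ∏_{I ⊆ {1,…,n}} (x₀ + ∑_{i ∈ I} x i)`. -/
def Phi {R : Type*} [CommRing R] (n : ℕ) (x0 : R) (x : ℕ → R) : R :=
  ∏ I ∈ (Finset.Icc 1 n).powerset, (x0 + ∑ i ∈ I, x i)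

/-- `p_n = Φ_n(1; x₁,…,xₙ) ∈ ℤ[x₁,…,xₙ]`. -/
noncomputable def pPol (n : ℕ) : MvPolynomial ℕ ℤ :=
  Phi n 1 fun i => X i

/-- Reduction of the integer coefficients mod `2`. -/
noncomputable def toF2 : MvPolynomial ℕ ℤ →+* MvPolynomial ℕ (ZMod 2) :=
  MvPolynomial.map (Int.castRingHom (ZMod 2))

lemma Phi_zero {R : Type*} [CommRing R] (x0 : R) (x : ℕ → R) : Phi 0 x0 x = x0 := by
  simp [Phi]

lemma Phi_succ {R : Type*} [CommRing R] (n : ℕ) (x0 : R) (x : ℕ → R) :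
    Phi (n + 1) x0 x = Phi n x0 x * Phi n (x0 + x (n + 1)) x := by
  classical
  have h1 : Finset.Icc 1 (n + 1) = insert (n + 1) (Finset.Icc 1 n) := by
    ext a; simp [Finset.mem_Icc]; omega
  unfold Phi
  rw [h1, Finset.prod_powerset_insert (by simp)]
  congr 1
  refine Finset.prod_congr rfl fun t ht => ?_
  rw [Finset.sum_insert (fun hc => by
    have := Finset.mem_powerset.1 ht hc
    simp [Finset.mem_Icc] at this)]
  ring

lemma Phi_add {R : Type*} [CommRing R] (h2 : (2 : R) = 0) (n : ℕ) (x : ℕ → R) (a b : R) :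
    Phi n (a + b) x = Phi n a x + Phi n b x := by
  induction n generalizing a b with
  | zero => simp [Phi_zero]
  | succ n ih =>
      rw [Phi_succ, Phi_succ, Phi_succ, show a + b + x (n + 1) = a + (b + x (n + 1)) by ring,
        ih a b, ih a (b + x (n + 1)), ih b (x (n + 1)), ih a (x (n + 1))]
      linear_combination (Phi n a x * Phi n b x) * h2

lemma map_Phi {R S : Type*} [CommRing R] [CommRing S] (f : R →+* S) (n : ℕ) (x0 : R)
    (x : ℕ → R) : f (Phi n x0 x) = Phi n (f x0) (fun i => f (x i)) := by
  simp [Phi, map_prod, map_sum]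

lemma Phi_isHomogeneous {R : Type*} [CommRing R] (n m : ℕ) :
    (Phi n (X m) (fun j => X j) : MvPolynomial ℕ R).IsHomogeneous (2 ^ n) := by
  have h := MvPolynomial.IsHomogeneous.prod ((Finset.Icc 1 n).powerset)
    (fun I => (X m : MvPolynomial ℕ R) + ∑ i ∈ I, X i) (fun _ => 1)
    (fun I _ => (isHomogeneous_X R m).add
      (MvPolynomial.IsHomogeneous.sum _ _ _ fun i _ => isHomogeneous_X R i))
  simpa [Phi, Finset.card_powerset, Nat.card_Icc] using h

lemma hc_sq (k : ℕ) (f : MvPolynomial ℕ (ZMod 2)) :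
    homogeneousComponent (2 * k) (f ^ 2) = (homogeneousComponent k f) ^ 2 := by
  conv_lhs => rw [← sum_homogeneousComponent f, sum_pow_char, map_sum]
  rw [Finset.sum_eq_single k]
  · rw [homogeneousComponent_of_mem
      (((homogeneousComponent_isHomogeneous k f).pow 2 : _))]
    simp [mul_comm]
  · intro b _ hb
    rw [homogeneousComponent_of_mem
      (((homogeneousComponent_isHomogeneous b f).pow 2 : _))]
    rw [if_neg (by omega : ¬ 2 * k = b * 2)]
  · intro hk
    have : f.totalDegree < k := by
      simp only [Finset.mem_range, not_lt] at hk; omega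
    rw [homogeneousComponent_eq_zero _ _ this]
    simp

lemma hc_mul_homog (d : ℕ) (f h : MvPolynomial ℕ (ZMod 2)) (hh : h.IsHomogeneous d) :
    homogeneousComponent d (f * h) = C (constantCoeff f) * h := by
  conv_lhs => rw [← sum_homogeneousComponent f, Finset.sum_mul, map_sum]
  rw [Finset.sum_eq_single 0]
  · rw [homogeneousComponent_of_mem
      (((homogeneousComponent_isHomogeneous 0 f).mul hh : _))]
    simp [homogeneousComponent_zero, constantCoeff_eq]
  · intro b _ hb
    rw [homogeneousComponent_of_mem
      (((homogeneousComponent_isHomogeneous b f).mul hh : _))]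
    rw [if_neg (by omega : ¬ d = b + d)]
  · intro hk
    exact absurd (Finset.mem_range.2 (Nat.succ_pos _)) hk

lemma constCoeff_P (n : ℕ) :
    constantCoeff (Phi n (1 : MvPolynomial ℕ (ZMod 2)) (fun j => X j)) = 1 := by
  simp [Phi, map_prod, map_sum]

lemma two_eq_zero_F2 : (2 : MvPolynomial ℕ (ZMod 2)) = 0 := by
  have : ((2 : ℕ) : MvPolynomial ℕ (ZMod 2)) = 0 := CharP.cast_eq_zero _ 2
  exact_mod_cast this

lemma main_lemma (n : ℕ) (hn : 1 ≤ n) :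
    homogeneousComponent (2 ^ (n - 1)) (Phi n (1 : MvPolynomial ℕ (ZMod 2)) (fun j => X j))
      = ∑ i ∈ Finset.range n, (Phi i (X (i + 1)) (fun j => X j)) ^ (2 ^ ((n - 1) - i)) := by
  induction n with
  | zero => omega
  | succ n ih =>
    rcases Nat.eq_zero_or_pos n with rfl | hn'
    · rw [Phi_succ, Phi_zero, one_mul, Phi_add two_eq_zero_F2, Phi_zero, Phi_zero, map_add]
      rw [homogeneousComponent_of_mem (isHomogeneous_one ℕ (ZMod 2)),
        homogeneousComponent_of_mem (isHomogeneous_X (ZMod 2) 1)]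
      simp [Phi_zero]
    · have hsub : n + 1 - 1 = n := rfl
      rw [hsub, Phi_succ, Phi_add two_eq_zero_F2, mul_add, ← sq]
      rw [map_add, show (2:ℕ) ^ n = 2 * 2 ^ (n - 1) by
        rw [← pow_succ']; congr 1; omega]
      rw [hc_sq, ih hn', hc_mul_homog _ _ _ (by
        have := Phi_isHomogeneous (R := ZMod 2) n (n + 1)
        rwa [show 2 * 2 ^ (n-1) = 2 ^ n by rw [← pow_succ']; congr 1; omega]),
        constCoeff_P, sum_pow_char, Finset.sum_range_succ]
      congr 1
      · refine Finset.sum_congr rfl fun i hi => ?_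
        rw [← pow_mul]
        congr 1
        have hi' : i < n := Finset.mem_range.1 hi
        rw [show 2 ^ ((n-1) - i) * 2 = 2 ^ (((n-1) - i) + 1) by rw [pow_succ]]
        congr 1
        omega
      · simp

/-- For every `n ≥ 1`, in `ℤ[x₁,…,xₙ]` one has
`pol_{2^{n−1}}(p_n) ≡ Σ_{i=0}^{n−1} Φ_i(x_{i+1}; x₁,…,x_i)^{2^{(n−1)−i}} (mod 2)`
(the `i = 0` summand being `x₁^{2^{n−1}}`, since `Φ₀(x₁) = x₁`). -/
theorem stmt8 (n : ℕ) (hn : 1 ≤ n) :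
    toF2 (homogeneousComponent (2 ^ (n - 1)) (pPol n))
      = toF2 (∑ i ∈ Finset.range n, (Phi i (X (i + 1)) fun j => X j) ^ (2 ^ ((n - 1) - i))) := by
  have hcomm : ∀ (d : ℕ) (f : MvPolynomial ℕ ℤ),
      toF2 (homogeneousComponent d f) = homogeneousComponent d (toF2 f) := by
    intro d f
    ext m
    simp only [toF2, coeff_map, coeff_homogeneousComponent]
    split <;> simp
  rw [hcomm]
  have h1 : toF2 (pPol n) = Phi n (1 : MvPolynomial ℕ (ZMod 2)) (fun j => X j) := by
    unfold pPol
    rw [map_Phi]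
    simp [toF2]
  rw [h1, main_lemma n hn, map_sum]
  refine Finset.sum_congr rfl fun i _ => ?_
  rw [map_pow, map_Phi]
  simp [toF2]
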